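/- One-step error bound for noisy Kaczmarz: in the setting of the noisy randomized Kaczmarz theorem, conditional on x*_{k-1}, the next iterate satisfies 𝔼‖x*_k - x‖² ≤ (1 - 1/R) ‖x*_{k-1} - x‖² + γ², where γ = max_i |r_i|/‖a_i‖. -/

import Mathlib

open Finset

/-- Euclidean norm on `Fin k → ℝ`. -/
noncomputable def enorm2 {k : ℕ} (v : Fin k → ℝ) : ℝ := Real.sqrt (∑ j, v j ^ 2)

/-- Standard inner product on `Fin k → ℝ`. -/
noncomputable def ip {k : ℕ} (v w : Fin k → ℝ) : ℝ := ∑ j, v j * w j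

/-- Frobenius norm of a matrix. -/
noncomputable def frob {m n : ℕ} (A : Matrix (Fin m) (Fin n) ℝ) : ℝ :=
  Real.sqrt (∑ i, ∑ j, A i j ^ 2)

/-- `‖A⁻¹‖ = inf {M : M‖Az‖ ≥ ‖z‖ for all z}`. -/
noncomputable def invNorm {m n : ℕ} (A : Matrix (Fin m) (Fin n) ℝ) : ℝ :=
  sInf {M : ℝ | ∀ z : Fin n → ℝ, enorm2 z ≤ M * enorm2 (A.mulVec z)}

/-!
With `e = y - x` and `t_i = ⟨a_i, e⟩`, the projection step along `a_i` satisfies the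
Pythagorean identity `‖a_i‖² ‖e'‖² = ‖a_i‖² ‖e‖² + r_i² - t_i²`. Averaging with the weights
`‖a_i‖² / ‖A‖_F²` gives `‖e‖² + (∑ r_i² - ‖A e‖²) / ‖A‖_F²`, and the bound follows from
`r_i² ≤ γ² ‖a_i‖²` and `‖e‖ ≤ ‖A⁻¹‖ ‖A e‖`, the latter because the infimum defining `‖A⁻¹‖`
is attained for injective `A`.
-/

open scoped Matrix

section EuclideanCoordinates

variable {k : ℕ}

lemma enorm2_sq (v : Fin k → ℝ) : enorm2 v ^ 2 = ∑ j, v j ^ 2 :=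
  Real.sq_sqrt (by positivity)

lemma enorm2_eq_norm_toLp (v : Fin k → ℝ) : enorm2 v = ‖WithLp.toLp 2 v‖ := by
  simp [enorm2, EuclideanSpace.norm_eq]

lemma enorm2_nonneg (v : Fin k → ℝ) : 0 ≤ enorm2 v := Real.sqrt_nonneg _

lemma enorm2_pos {v : Fin k → ℝ} (hv : v ≠ 0) : 0 < enorm2 v := by
  rw [enorm2_eq_norm_toLp]
  exact norm_pos_iff.mpr (by simpa using hv)

lemma ip_sub_right (v w u : Fin k → ℝ) : ip v (w - u) = ip v w - ip v u := by
  simp only [ip, Pi.sub_apply, mul_sub, sum_sub_distrib]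

lemma enorm2_add_smul_sq (e a : Fin k → ℝ) (c : ℝ) :
    enorm2 (e + c • a) ^ 2 = enorm2 e ^ 2 + 2 * c * ip a e + c ^ 2 * enorm2 a ^ 2 := by
  simp only [enorm2_sq, ip, mul_sum, ← sum_add_distrib]
  refine sum_congr rfl fun j _ => ?_
  simp only [Pi.add_apply, Pi.smul_apply, smul_eq_mul]
  ring

lemma enorm2_sq_mul_enorm2_add_smul_sq {a : Fin k → ℝ} (ha : a ≠ 0) (e : Fin k → ℝ)
    (s : ℝ) :
    enorm2 a ^ 2 * enorm2 (e + ((s - ip a e) / enorm2 a ^ 2) • a) ^ 2 =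
      enorm2 a ^ 2 * enorm2 e ^ 2 + s ^ 2 - ip a e ^ 2 := by
  have := (enorm2_pos ha).ne'
  rw [enorm2_add_smul_sq]
  field_simp
  ring

end EuclideanCoordinates

section MatrixBounds

variable {m n : ℕ} (A : Matrix (Fin m) (Fin n) ℝ)

lemma frob_sq_eq_sum_enorm2_sq : frob A ^ 2 = ∑ i, enorm2 (A i) ^ 2 := by
  simp only [frob, enorm2_sq]
  exact Real.sq_sqrt (by positivity)

lemma enorm2_mulVec_sq (z : Fin n → ℝ) : enorm2 (A *ᵥ z) ^ 2 = ∑ i, ip (A i) z ^ 2 :=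
  enorm2_sq _

variable {A}

lemma Matrix.mulVec_injective_of_rank_eq (hrank : A.rank = n) : Function.Injective A.mulVec := by
  have hker : Module.finrank ℝ (LinearMap.ker A.mulVecLin) = 0 := by
    have h := LinearMap.finrank_range_add_finrank_ker A.mulVecLin
    rw [← Matrix.rank, hrank, Module.finrank_fin_fun] at h
    omega
  exact LinearMap.ker_eq_bot.mp (Submodule.finrank_eq_zero.mp hker)

lemma exists_enorm2_le_mul_enorm2_mulVec (hA : Function.Injective A.mulVec) :
    ∃ K : ℝ, ∀ z, enorm2 z ≤ K * enorm2 (A *ᵥ z) := by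
  have hL : Function.Injective (Matrix.toLpLin 2 2 A) := fun u v huv =>
    WithLp.ofLp_injective 2 (hA (congrArg (WithLp.ofLp (p := 2)) huv))
  obtain ⟨K, -, hK⟩ := (LinearMap.injective_iff_antilipschitz _).mp hL
  exact ⟨K, fun z => by
    simpa [enorm2_eq_norm_toLp, Matrix.toLpLin_toLp] using
      ZeroHomClass.bound_of_antilipschitz _ hK (WithLp.toLp 2 z)⟩

lemma enorm2_le_invNorm_mul (hA : Function.Injective A.mulVec) (z : Fin n → ℝ) :
    enorm2 z ≤ invNorm A * enorm2 (A *ᵥ z) := by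
  rcases eq_or_ne z 0 with rfl | hz
  · simp [enorm2]
  -- A nonzero `z` bounds `S` below by `0`, and `S` is closed, so `sInf S ∈ S`.
  set S := {M : ℝ | ∀ z : Fin n → ℝ, enorm2 z ≤ M * enorm2 (A *ᵥ z)}
  have hS : IsClosed S := by
    simp only [S, Set.ofPred_forall]
    exact isClosed_iInter fun z => isClosed_le continuous_const (by fun_prop)
  have hbdd : BddBelow S := ⟨0, fun M hM => by
    by_contra! hM0
    have := mul_nonpos_of_nonpos_of_nonneg hM0.le (enorm2_nonneg (A *ᵥ z))
    linarith [hM z, enorm2_pos hz]⟩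
  exact hS.csInf_mem (exists_enorm2_le_mul_enorm2_mulVec hA) hbdd z

end MatrixBounds

lemma sq_le_sq_iSup_div_mul_sq {ι : Type*} [Finite ι] {r w : ι → ℝ} (hw : ∀ i, 0 < w i)
    (i : ι) : r i ^ 2 ≤ (⨆ j, |r j| / w j) ^ 2 * w i ^ 2 := by
  have h := le_ciSup (Set.finite_range fun j => |r j| / w j).bddAbove i
  rw [div_le_iff₀ (hw i)] at h
  rw [← mul_pow, ← sq_abs]
  exact pow_le_pow_left₀ (abs_nonneg _) h 2

-- The degenerate cases `F = 0` and `N = 0` go through because `x / 0 = 0`.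
lemma mul_add_sub_div_le_one_sub_inv_mul_add {F D R T N g : ℝ} (hF : 0 ≤ F) (hN : 0 ≤ N)
    (hD : 0 ≤ D) (hT : 0 ≤ T) (hg : 0 ≤ g) (hR : R ≤ g * F) (hDT : D ≤ N * T) :
    (F * D + R - T) / F ≤ (1 - 1 / (N * F)) * D + g := by
  rcases hF.eq_or_lt with rfl | hF
  · simp only [div_zero, mul_zero, sub_zero]
    positivity
  have hDNF : D / (N * F) ≤ T / F := by
    rcases hN.eq_or_lt with rfl | hN
    · simp only [zero_mul, div_zero]
      positivity
    grw [hDT, mul_div_mul_left _ _ hN.ne']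
  rw [add_sub_assoc, add_div, mul_div_cancel_left₀ _ hF.ne', sub_div, one_sub_mul,
    one_div_mul_eq_div]
  grw [div_le_of_le_mul₀ hF.le hg hR]
  linarith

/-- One-step error bound for noisy randomized Kaczmarz. -/
theorem stmt_10 (m n : ℕ) (A : Matrix (Fin m) (Fin n) ℝ) (hrank : A.rank = n)
    (hrows : ∀ i, A i ≠ 0) (x y : Fin n → ℝ) (b r : Fin m → ℝ)
    (hb : ∀ i, ip (A i) x = b i) :
    ∑ i, (enorm2 (A i) ^ 2 / frob A ^ 2) *
        enorm2 ((y + ((b i + r i - ip (A i) y) / enorm2 (A i) ^ 2) • A i) - x) ^ 2 ≤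
      (1 - 1 / (invNorm A ^ 2 * frob A ^ 2)) * enorm2 (y - x) ^ 2 +
        (⨆ i, |r i| / enorm2 (A i)) ^ 2 := by
  have hstep : ∀ i, enorm2 (A i) ^ 2 *
      enorm2 ((y + ((b i + r i - ip (A i) y) / enorm2 (A i) ^ 2) • A i) - x) ^ 2 =
        enorm2 (A i) ^ 2 * enorm2 (y - x) ^ 2 + r i ^ 2 - ip (A i) (y - x) ^ 2 := by
    intro i
    have hres : ip (A i) x + r i - ip (A i) y = r i - ip (A i) (y - x) := by
      rw [ip_sub_right]; ring
    rw [add_sub_right_comm, ← hb i, hres]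
    exact enorm2_sq_mul_enorm2_add_smul_sq (hrows i) (y - x) (r i)
  simp_rw [div_mul_eq_mul_div, ← sum_div, hstep, sum_sub_distrib, sum_add_distrib, ← sum_mul,
    ← frob_sq_eq_sum_enorm2_sq, ← enorm2_mulVec_sq]
  refine mul_add_sub_div_le_one_sub_inv_mul_add (sq_nonneg _) (sq_nonneg _) (sq_nonneg _)
    (sq_nonneg _) (sq_nonneg _) ?_ ?_
  · rw [frob_sq_eq_sum_enorm2_sq, mul_sum]
    exact sum_le_sum fun i _ => sq_le_sq_iSup_div_mul_sq (fun i => enorm2_pos (hrows i)) i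
  · rw [← mul_pow]
    exact pow_le_pow_left₀ (enorm2_nonneg _)
      (enorm2_le_invNorm_mul (Matrix.mulVec_injective_of_rank_eq hrank) _) 2
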